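/- arXiv:1903.04923 — 2 statements merged into one kernel-verified Lean document; each statement's English description precedes it below -/
import Mathlib

section
/- Let G be a graph with incidence matrix E, N = diag(ν_{ij}) and D = diag(d_{ij}) positive diagonal matrices on the edges, A a nonnegative diagonal matrix, 𝓜 = A + E N D Eᵀ, and M any matrix with |M_{ij} − 𝓜_{ij}| ≤ m for all i, j, where m ≤ (1/4)·min_{{i,j}∈E}(ν_{ij} d_{ij}). Set ε = 2m. Then: (a) for every non-edge pair i ≠ j, |M_{ij}| < ε; (b) for every edge {i,j}, M_{ij} < −ε; and (c) for every edge {i,j}, the estimate p_{ij} = −M_{ij}/d_{ij} satisfies |p_{ij} − ν_{ij}| ≤ m/d_{ij}. Hence thresholding the off-diagonal entries of M at −ε exactly recovers the edge set of G. -/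
open Matrix

/-- thresholding the entries of an approximation `M` of
`𝓜 = A + E N D Eᵀ` at `ε = 2m` exactly recovers the graph, and the weight estimates
`p_{ij} = −M_{ij}/d_{ij}` are accurate to `m/d_{ij}`. -/
theorem stmt15 (n : ℕ) (G : SimpleGraph (Fin n)) [DecidableRel G.Adj]
    (ν d : Fin n → Fin n → ℝ)
    (hν : ∀ i j, G.Adj i j → 0 < ν i j) (hd : ∀ i j, G.Adj i j → 0 < d i j)
    (Mcal M : Matrix (Fin n) (Fin n) ℝ)
    (hMcal : ∀ i j : Fin n, i ≠ j →
      Mcal i j = if G.Adj i j then -(ν i j * d i j) else 0)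
    (m : ℝ) (hm0 : 0 < m)
    (herr : ∀ i j : Fin n, |M i j - Mcal i j| ≤ m)
    (hm : ∀ i j : Fin n, G.Adj i j → m ≤ (1 / 4) * (ν i j * d i j))
    (ε : ℝ) (hε : ε = 2 * m) :
    (∀ i j : Fin n, i ≠ j → ¬G.Adj i j → |M i j| < ε) ∧
    (∀ i j : Fin n, G.Adj i j → M i j < -ε) ∧
    (∀ i j : Fin n, G.Adj i j → |(-(M i j) / d i j) - ν i j| ≤ m / d i j) ∧
    (∀ i j : Fin n, i ≠ j → (G.Adj i j ↔ M i j < -ε)) := by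
  subst hε
  have ha : ∀ i j : Fin n, i ≠ j → ¬G.Adj i j → |M i j| < 2 * m := by
    intro i j hij hadj
    have h0 := hMcal i j hij
    rw [if_neg hadj] at h0
    have := herr i j
    rw [h0, sub_zero] at this
    linarith
  have hb : ∀ i j : Fin n, G.Adj i j → M i j < -(2 * m) := by
    intro i j hadj
    have h0 := hMcal i j (G.ne_of_adj hadj)
    rw [if_pos hadj] at h0
    have h1 := abs_le.mp (herr i j)
    have h2 := hm i j hadj
    have := h1.2
    rw [h0] at this
    linarith
  refine ⟨ha, hb, ?_, ?_⟩
  · intro i j hadj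
    have hdp := hd i j hadj
    have h0 := hMcal i j (G.ne_of_adj hadj)
    rw [if_pos hadj] at h0
    have : -(M i j) / d i j - ν i j = (Mcal i j - M i j) / d i j := by
      rw [h0]; field_simp; ring
    rw [this, abs_div, abs_of_pos hdp, abs_sub_comm]
    gcongr; exact herr i j
  · intro i j hij
    constructor
    · exact hb i j
    · intro hlt
      by_contra hadj
      have := ha i j hij hadj
      have := abs_lt.mp this
      linarith [this.1]
end

section
/- Let τ₁,…,τᵣ ∈ ℝᵐ with r < m, and let P be a symmetric positive-definite m×m matrix. Then there exists a nonzero vector τ⋆ orthogonal to τ₁,…,τᵣ such that for every α > 0 the matrix P⁻¹ + α τ⋆τ⋆ᵀ is positive definite, its inverse P_α = (P⁻¹ + ατ⋆τ⋆ᵀ)⁻¹ satisfies P_α⁻¹ τᵢ = P⁻¹ τᵢ for all i = 1,…,r, and P_α ≠ P. -/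
open Matrix

lemma vecMulVec_mulVec' {m : ℕ} (v w x : Fin m → ℝ) :
    (Matrix.vecMulVec v w) *ᵥ x = (w ⬝ᵥ x) • v := by
  ext j
  simp only [Matrix.mulVec, Matrix.vecMulVec_apply, dotProduct, Finset.mul_sum,
    Pi.smul_apply, smul_eq_mul]
  rw [Finset.sum_mul]
  exact Finset.sum_congr rfl fun k _ => by ring

lemma posSemidef_smul_vecMulVec {m : ℕ} (v : Fin m → ℝ) {α : ℝ} (hα : 0 ≤ α) :
    (α • Matrix.vecMulVec v v).PosSemidef := by
  rw [Matrix.posSemidef_iff_dotProduct_mulVec]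
  constructor
  · ext i j
    simp [Matrix.vecMulVec_apply, mul_comm]
  · intro x
    rw [Matrix.smul_mulVec, vecMulVec_mulVec', dotProduct_smul,
      dotProduct_smul]
    have h1 : v ⬝ᵥ x = x ⬝ᵥ v := dotProduct_comm v x
    have h2 : star x ⬝ᵥ v = x ⬝ᵥ v := rfl
    simp only [smul_eq_mul, h1, h2]
    nlinarith [mul_self_nonneg (x ⬝ᵥ v)]

/-- for fewer than `m` probing vectors `τᵢ` there exists a nonzero `τ⋆`
orthogonal to all of them, and for every `α > 0` the matrix `P⁻¹ + ατ⋆τ⋆ᵀ` is positive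
definite, its inverse `P_α` satisfies `P_α⁻¹τᵢ = P⁻¹τᵢ`, and `P_α ≠ P`. -/
theorem stmt18 (m r : ℕ) (hr : r < m)
    (τ : Fin r → Fin m → ℝ)
    (P : Matrix (Fin m) (Fin m) ℝ) (hP : P.PosDef) :
    ∃ τs : Fin m → ℝ, τs ≠ 0 ∧ (∀ i, τs ⬝ᵥ τ i = 0) ∧
      ∀ α : ℝ, 0 < α →
        (P⁻¹ + α • Matrix.vecMulVec τs τs).PosDef ∧
        (∀ i, ((P⁻¹ + α • Matrix.vecMulVec τs τs)⁻¹)⁻¹.mulVec (τ i) = P⁻¹.mulVec (τ i)) ∧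
        (P⁻¹ + α • Matrix.vecMulVec τs τs)⁻¹ ≠ P := by
  -- find nonzero τs orthogonal to all τ i
  set L : (Fin m → ℝ) →ₗ[ℝ] (Fin r → ℝ) := Matrix.mulVecLin (Matrix.of τ) with hL
  have hninj : ¬ Function.Injective L := by
    intro h
    have := LinearMap.finrank_le_finrank_of_injective h
    simp [Module.finrank_fintype_fun_eq_card] at this
    omega
  rw [Function.not_injective_iff] at hninj
  obtain ⟨x, y, hxy, hne⟩ := hninj
  refine ⟨x - y, sub_ne_zero.mpr hne, ?_, ?_⟩
  · intro i
    have : L (x - y) = 0 := by rw [map_sub, hxy, sub_self]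
    have hi := congrFun this i
    simp [hL, Matrix.mulVecLin, Matrix.mulVec, dotProduct] at hi ⊢
    simpa [mul_comm] using hi
  · intro α hα
    set v := x - y with hv
    have hvne : v ≠ 0 := sub_ne_zero.mpr hne
    have horth : ∀ i, v ⬝ᵥ τ i = 0 := by
      intro i
      have : L v = 0 := by rw [hv, map_sub, hxy, sub_self]
      have hi := congrFun this i
      simpa [hL, Matrix.mulVecLin, Matrix.mulVec, dotProduct_comm] using hi
    have hPD : (P⁻¹ + α • Matrix.vecMulVec v v).PosDef :=
      hP.inv.add_posSemidef (posSemidef_smul_vecMulVec v hα.le)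
    refine ⟨hPD, ?_, ?_⟩
    · intro i
      rw [Matrix.nonsing_inv_nonsing_inv _ (isUnit_iff_ne_zero.mpr hPD.det_pos.ne')]
      rw [Matrix.add_mulVec, Matrix.smul_mulVec, vecMulVec_mulVec', horth i]
      simp
    · intro hEq
      have h1 : P⁻¹ + α • Matrix.vecMulVec v v = P⁻¹ := by
        rw [← Matrix.nonsing_inv_nonsing_inv (P⁻¹ + α • Matrix.vecMulVec v v)
          (isUnit_iff_ne_zero.mpr hPD.det_pos.ne'), hEq]
      have h2 : α • Matrix.vecMulVec v v = 0 := by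
        have := congrArg (· - P⁻¹) h1
        simpa using this
      obtain ⟨j, hj⟩ : ∃ j, v j ≠ 0 := by
        by_contra h
        push_neg at h
        exact hvne (funext h)
      have h3 : α * (v j * v j) = 0 := by
        simpa [Matrix.vecMulVec_apply] using congrFun (congrFun h2 j) j
      exact mul_ne_zero hα.ne' (mul_ne_zero hj hj) h3
end
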